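/- Reference allocation succeeds: if state s is well-formed with respect to Γ and Σ, and value v has type τ, then there exist a memory Θ'', a fresh location l, such that allocating size(τ) bytes in the memory of s yields (Θ', l), storing v at l in Θ' yields Θ'', and the resulting state (Δ, Ω, Θ'') is well-formed with respect to Γ and the store typing Σ extended with l ↦ τ*. -/

import Mathlib

/-- Types. -/
inductive Ty : Type
  | int | bool | unit
  | ptr : Ty → Ty
deriving DecidableEq

/-- Values. -/
inductive Val : Type
  | intV : Int → Val
  | boolV : Bool → Val
  | unitV : Val
  | locV : Nat → Val
deriving DecidableEq

/-- Access permissions (CompCert-style), ordered with `Freeable` maximal. -/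
inductive Perm : Type
  | nonempty | readable | writable | freeable
deriving DecidableEq

def Perm.toNat : Perm → Nat
  | .nonempty => 0
  | .readable => 1
  | .writable => 2
  | .freeable => 3

/-- Permission order. -/
def Perm.le (p q : Perm) : Prop := p.toNat ≤ q.toNat

/-- CompCert-style memory: contents, permissions, and a fresh-block counter. -/
structure Mem where
  contents : Nat → Option Val
  perm : Nat → Option Perm
  next : Nat

/-- `isValidAccess Θ l p`: `l` is an allocated address of `Θ` whose permission
is at least `p`. -/
def isValidAccess (Θ : Mem) (l : Nat) (p : Perm) : Prop :=
  ∃ q, Θ.perm l = some q ∧ Perm.le p q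

/-- Value typing relative to a store typing `Σ` (a location `l` has type
`τ*` when `Σ l = some τ`). -/
def ValHasTy (St : Nat → Option Ty) : Val → Ty → Prop
  | .intV _, .int => True
  | .boolV _, .bool => True
  | .unitV, .unit => True
  | .locV l, .ptr τ => St l = some τ
  | _, _ => False

/-- Store the value `v` at location `l`. -/
def setMem (Θ : Mem) (l : Nat) (v : Val) : Mem :=
  { Θ with contents := fun l' => if l' = l then some v else Θ.contents l' }

/-- Allocate a fresh block (the bounds `lo`, `hi` delimit its size);
allocation is total and returns the fresh location. -/
def alloc (Θ : Mem) (_lo _hi : Int) : Mem × Nat :=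
  ({ contents := Θ.contents,
     perm := fun l => if l = Θ.next then some Perm.freeable else Θ.perm l,
     next := Θ.next + 1 }, Θ.next)

/-- Program states: globals Δ, variable environment Ω, memory Θ. -/
structure State where
  glob : String → Option Nat
  env : String → Option (Nat × Ty)
  mem : Mem

/-- Extend a store typing. -/
def updSt (St : Nat → Option Ty) (l : Nat) (τ : Ty) : Nat → Option Ty :=
  fun l' => if l' = l then some τ else St l'

/-- Extend a typing context. -/
def updTC (Γ : String → Option Ty) (x : String) (τ : Ty) : String → Option Ty :=
  fun y => if y = x then some τ else Γ y

/-- Extend a variable environment. -/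
def updEnv (Ω : String → Option (Nat × Ty)) (x : String) (l : Nat) (τ : Ty) :
    String → Option (Nat × Ty) :=
  fun y => if y = x then some (l, τ) else Ω y

/-- Byte size of a type. -/
def sizeTy : Ty → Int
  | .int => 8
  | .bool => 1
  | .unit => 1
  | .ptr _ => 8

/-- Well-formed states (store-typing invariants plus freshness of the
allocation counter). -/
def WFState (Γ : String → Option Ty) (St : Nat → Option Ty) (s : State) : Prop :=
  (∀ x τ, Γ x = some τ →
      ∃ l, (s.env x = some (l, τ) ∨ s.glob x = some l) ∧ St l = some τ) ∧
  (∀ l τ, St l = some τ → ∃ v, s.mem.contents l = some v ∧ ValHasTy St v τ) ∧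
  (∀ l τ, St l = some τ → isValidAccess s.mem l Perm.freeable) ∧
  (∀ l, isValidAccess s.mem l Perm.freeable → ∃ τ, St l = some τ) ∧
  (∀ l, s.mem.next ≤ l → s.mem.perm l = none ∧ s.mem.contents l = none)

/-! The new block is `Θ.next`, which the freshness invariant keeps out of both the permission map
and (through the permission invariant) the domain of the store typing. Hence extending the store
typing at `Θ.next` changes no old typing judgement, and the block itself gets `Freeable`
permission and a value of the right type. -/

theorem not_isValidAccess_of_perm_eq_none {Θ : Mem} {l : Nat} (h : Θ.perm l = none) (p : Perm) :
    ¬ isValidAccess Θ l p := by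
  rintro ⟨q, hq, -⟩
  simp [h] at hq

theorem updSt_self (St : Nat → Option Ty) (l : Nat) (τ : Ty) : updSt St l τ l = some τ := by
  simp [updSt]

theorem updSt_of_ne (St : Nat → Option Ty) (τ : Ty) {l l' : Nat} (h : l' ≠ l) :
    updSt St l τ l' = St l' := by
  simp [updSt, h]

theorem updSt_of_eq_some {St : Nat → Option Ty} {l l' : Nat} {σ : Ty} (hl : St l = none)
    (τ : Ty) (h : St l' = some σ) : updSt St l τ l' = some σ := by
  have hne : l' ≠ l := by rintro rfl; simp [hl] at h
  rw [updSt_of_ne St τ hne, h]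

theorem ValHasTy.updSt {St : Nat → Option Ty} {l : Nat} (hl : St l = none) (τ : Ty) {w : Val}
    {σ : Ty} (h : ValHasTy St w σ) : ValHasTy (updSt St l τ) w σ := by
  cases w <;> cases σ <;> first
    | exact h
    | exact updSt_of_eq_some hl τ h

namespace WFState

variable {Γ : String → Option Ty} {St : Nat → Option Ty} {s : State}

theorem perm_next_eq_none (hwf : WFState Γ St s) : s.mem.perm s.mem.next = none :=
  (hwf.2.2.2.2 _ le_rfl).1

theorem st_next_eq_none (hwf : WFState Γ St s) : St s.mem.next = none := by
  cases hSt : St s.mem.next with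
  | none => rfl
  | some σ =>
    exact absurd (hwf.2.2.1 _ σ hSt) (not_isValidAccess_of_perm_eq_none hwf.perm_next_eq_none _)

theorem setMem_alloc (hwf : WFState Γ St s) {v : Val} {τ : Ty} (hv : ValHasTy St v τ)
    (lo hi : Int) :
    WFState Γ (updSt St s.mem.next τ)
      { s with mem := setMem (alloc s.mem lo hi).1 s.mem.next v } := by
  have hnext : St s.mem.next = none := hwf.st_next_eq_none
  obtain ⟨hΓ, hcontents, hperm, hdom, hfresh⟩ := hwf
  refine ⟨?_, ?_, ?_, ?_, ?_⟩
  · intro x σ hx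
    obtain ⟨l, hl, hσ⟩ := hΓ x σ hx
    exact ⟨l, hl, updSt_of_eq_some hnext τ hσ⟩
  · intro l σ hl
    by_cases hln : l = s.mem.next
    · subst hln
      obtain rfl : τ = σ := by simpa [updSt_self] using hl
      exact ⟨v, by simp [setMem], hv.updSt hnext τ⟩
    · rw [updSt_of_ne St τ hln] at hl
      obtain ⟨w, hw, hwσ⟩ := hcontents l σ hl
      exact ⟨w, by simp [setMem, alloc, hln, hw], hwσ.updSt hnext τ⟩
  · intro l σ hl
    by_cases hln : l = s.mem.next
    · exact ⟨.freeable, by simp [setMem, alloc, hln], le_rfl⟩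
    · rw [updSt_of_ne St τ hln] at hl
      obtain ⟨q, hq, hle⟩ := hperm l σ hl
      exact ⟨q, by simp [setMem, alloc, hln, hq], hle⟩
  · rintro l ⟨q, hq, hle⟩
    by_cases hln : l = s.mem.next
    · exact ⟨τ, by rw [hln, updSt_self]⟩
    · simp only [setMem, alloc, hln, if_false] at hq
      obtain ⟨σ, hσ⟩ := hdom l ⟨q, hq, hle⟩
      exact ⟨σ, by rw [updSt_of_ne St τ hln, hσ]⟩
  · intro l hl
    simp only [setMem, alloc] at hl
    have hln : l ≠ s.mem.next := by omega
    simpa [setMem, alloc, hln] using hfresh l (by omega)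

end WFState

/-- reference allocation succeeds.  Allocating `size(τ)` bytes
and storing the value `v : τ` in the fresh block yields a state that is
well-formed with respect to `Γ` and the store typing extended with `l ↦ τ*`. -/
theorem ref_allocation_succeeds
    (Γ : String → Option Ty) (St : Nat → Option Ty) (s : State)
    (v : Val) (τ : Ty)
    (hwf : WFState Γ St s) (hv : ValHasTy St v τ) :
    ∃ (Θ' : Mem) (l : Nat) (Θ'' : Mem),
      alloc s.mem 0 (sizeTy τ) = (Θ', l) ∧
      setMem Θ' l v = Θ'' ∧
      (∀ p, ¬ isValidAccess s.mem l p) ∧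
      WFState Γ (updSt St l τ) { s with mem := Θ'' } :=
  ⟨_, s.mem.next, _, rfl, rfl, not_isValidAccess_of_perm_eq_none hwf.perm_next_eq_none,
    hwf.setMem_alloc hv 0 (sizeTy τ)⟩
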